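/- arXiv:1708.06447 — 7 statements merged into one kernel-verified Lean document; each statement's English description precedes it below -/
import Mathlib

section
/- Let A be a selfadjoint bounded operator on a complex Hilbert space H with spectrum contained in [γ,Γ]. Let h:[γ,Γ]→ℝ₊ be continuous and nonnegative, and let f,g:[γ,Γ]→ℝ be continuous and h-synchronous on [γ,Γ]. Then for every x ∈ H with ‖x‖ = 1, ⟨h(A)²x,x⟩⟨f(A)g(A)x,x⟩ ≥ ⟨h(A)g(A)x,x⟩⟨h(A)f(A)x,x⟩. -/
/-!
For fixed `t`, the function `s ↦ (h t * f s - h s * f t) * (h t * g s - h s * g t)` is nonnegative.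
Expanding it and applying a positive linear functional `Λ` in `s` gives a nonnegative function of
`t`; applying `Λ` once more gives `2 * (Λ (h * h) * Λ (f * g) - Λ (h * f) * Λ (h * g)) ≥ 0`.
The functional here is `k ↦ re ⟪k(A) x, x⟫`, positive because the continuous functional calculus
is order preserving.
-/

open scoped InnerProductSpace

theorem PositiveLinearMap.apply_mul_mul_le_of_synchronous {X : Type*} [TopologicalSpace X]
    (Λ : C(X, ℝ) →ₚ[ℝ] ℝ) {f g h : C(X, ℝ)}
    (hsync : ∀ s t, 0 ≤ (h t * f s - h s * f t) * (h t * g s - h s * g t)) :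
    Λ (h * g) * Λ (h * f) ≤ Λ (h * h) * Λ (f * g) := by
  have hΛs : ∀ t, 0 ≤ h t * h t * Λ (f * g) + f t * g t * Λ (h * h)
      - h t * g t * Λ (h * f) - h t * f t * Λ (h * g) := by
    intro t
    have hpos : 0 ≤ (h t * h t) • (f * g) + (f t * g t) • (h * h)
        - (h t * g t) • (h * f) - (h t * f t) • (h * g) := ContinuousMap.le_def.2 fun s => by
      simp only [ContinuousMap.zero_apply, ContinuousMap.sub_apply, ContinuousMap.add_apply,
        ContinuousMap.smul_apply, ContinuousMap.mul_apply, smul_eq_mul]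
      linarith [hsync s t]
    simpa only [map_sub, map_add, map_smul, smul_eq_mul] using Λ.map_nonneg hpos
  have hpos : 0 ≤ Λ (f * g) • (h * h) + Λ (h * h) • (f * g)
      - Λ (h * f) • (h * g) - Λ (h * g) • (h * f) := ContinuousMap.le_def.2 fun t => by
    simp only [ContinuousMap.zero_apply, ContinuousMap.sub_apply, ContinuousMap.add_apply,
      ContinuousMap.smul_apply, ContinuousMap.mul_apply, smul_eq_mul]
    linarith [hΛs t]
  have hΛ := Λ.map_nonneg hpos
  simp only [map_sub, map_add, map_smul, smul_eq_mul] at hΛ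
  linarith

namespace ContinuousLinearMap

variable {E : Type*} [NormedAddCommGroup E] [InnerProductSpace ℂ E] [CompleteSpace E]

noncomputable def reApplyInnerSelfPositiveLinearMap (x : E) : (E →L[ℂ] E) →ₚ[ℝ] ℝ :=
  PositiveLinearMap.mk₀
    { toFun := fun T => T.reApplyInnerSelf x
      map_add' := fun S T => by simp [reApplyInnerSelf_apply, inner_add_left]
      map_smul' := fun c T => by
        simp [reApplyInnerSelf_apply, ← Complex.coe_smul, inner_smul_left] }
    fun T hT => ((nonneg_iff_isPositive T).1 hT).2 x

end ContinuousLinearMap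

theorem stmt_5_general {H : Type*} [NormedAddCommGroup H] [InnerProductSpace ℂ H] [CompleteSpace H]
    (A : H →L[ℂ] H) (hA : IsSelfAdjoint A) (γ Γ : ℝ)
    (hspec : spectrum ℝ A ⊆ Set.Icc γ Γ)
    (h f g : ℝ → ℝ)
    (hh : ContinuousOn h (Set.Icc γ Γ))
    (hf : ContinuousOn f (Set.Icc γ Γ)) (hg : ContinuousOn g (Set.Icc γ Γ))
    (hsync : ∀ s ∈ Set.Icc γ Γ, ∀ t ∈ Set.Icc γ Γ,
      0 ≤ (h t * f s - h s * f t) * (h t * g s - h s * g t))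
    (x : H) :
    (⟪(cfc h A * cfc g A) x, x⟫_ℂ).re * (⟪(cfc h A * cfc f A) x, x⟫_ℂ).re ≤
      (⟪((cfc h A) ^ 2) x, x⟫_ℂ).re * (⟪(cfc f A * cfc g A) x, x⟫_ℂ).re := by
  have hh' := hh.mono hspec
  have hf' := hf.mono hspec
  have hg' := hg.mono hspec
  let Λ := (ContinuousLinearMap.reApplyInnerSelfPositiveLinearMap x).comp
    (PositiveLinearMap.ofClass (cfcHom (R := ℝ) hA))
  have key := Λ.apply_mul_mul_le_of_synchronous (f := ⟨_, hf'.domRestrict⟩)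
    (g := ⟨_, hg'.domRestrict⟩) (h := ⟨_, hh'.domRestrict⟩)
    fun s t => hsync s (hspec s.2) t (hspec t.2)
  rw [sq, cfc_apply h A, cfc_apply f A, cfc_apply g A, ← map_mul, ← map_mul, ← map_mul, ← map_mul]
  exact key

theorem stmt_5 {H : Type*} [NormedAddCommGroup H] [InnerProductSpace ℂ H] [CompleteSpace H]
    (A : H →L[ℂ] H) (hA : IsSelfAdjoint A) (γ Γ : ℝ) (hγΓ : γ < Γ)
    (hspec : spectrum ℝ A ⊆ Set.Icc γ Γ)
    (h f g : ℝ → ℝ)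
    (hh : ContinuousOn h (Set.Icc γ Γ)) (hh0 : ∀ t ∈ Set.Icc γ Γ, 0 ≤ h t)
    (hf : ContinuousOn f (Set.Icc γ Γ)) (hg : ContinuousOn g (Set.Icc γ Γ))
    (hsync : ∀ s ∈ Set.Icc γ Γ, ∀ t ∈ Set.Icc γ Γ,
      0 ≤ (h t * f s - h s * f t) * (h t * g s - h s * g t))
    (x : H) (hx : ‖x‖ = 1) :
    (⟪(cfc h A * cfc g A) x, x⟫_ℂ).re * (⟪(cfc h A * cfc f A) x, x⟫_ℂ).re ≤
      (⟪((cfc h A) ^ 2) x, x⟫_ℂ).re * (⟪(cfc f A * cfc g A) x, x⟫_ℂ).re :=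
  stmt_5_general A hA γ Γ hspec h f g hh hf hg hsync x
end

section
/- Let A be a selfadjoint bounded operator on a complex Hilbert space H with spectrum in [γ,Γ], h:[γ,Γ]→ℝ₊ continuous nonnegative, and f,g:[γ,Γ]→ℝ continuous and h-asynchronous on [γ,Γ]. Then for every unit vector x ∈ H, ⟨h(A)²x,x⟩⟨f(A)g(A)x,x⟩ ≤ ⟨h(A)g(A)x,x⟩⟨h(A)f(A)x,x⟩. -/
/-!
Let `Λ φ = re ⟪cfc φ A x, x⟫`, a positive linear functional on `C(spectrum ℝ A, ℝ)`.
Asynchrony says that `Ψ(s, t) = (h t f s - h s f t) (h t g s - h s g t) ≤ 0`. Applying `Λ` in `s`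
for fixed `t`, and then once more in `t`, yields
`2 (Λ(h²) Λ(fg) - Λ(hg) Λ(hf)) ≤ 0`.
-/

open scoped InnerProductSpace

namespace PositiveLinearMap

variable {X : Type*} [TopologicalSpace X]

theorem mul_le_mul_of_asynchronous (Λ : C(X, ℝ) →ₚ[ℝ] ℝ) (h f g : C(X, ℝ))
    (hasync : ∀ s t, (h t * f s - h s * f t) * (h t * g s - h s * g t) ≤ 0) :
    Λ (h * h) * Λ (f * g) ≤ Λ (h * g) * Λ (h * f) := by
  have hΛΨ (t : X) :
      h t * h t * Λ (f * g) - h t * g t * Λ (h * f) - h t * f t * Λ (h * g)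
        + f t * g t * Λ (h * h) ≤ 0 := by
    have hΨ : (h t * h t) • (f * g) - (h t * g t) • (h * f) - (h t * f t) • (h * g)
        + (f t * g t) • (h * h) ≤ 0 := ContinuousMap.le_def.mpr fun s => by
      simp only [ContinuousMap.add_apply, ContinuousMap.sub_apply, ContinuousMap.smul_apply,
        ContinuousMap.mul_apply, ContinuousMap.zero_apply, smul_eq_mul]
      linear_combination hasync s t
    simpa [smul_eq_mul] using map_nonpos Λ hΨ
  have hΦ : Λ (f * g) • (h * h) - Λ (h * f) • (h * g) - Λ (h * g) • (h * f)
      + Λ (h * h) • (f * g) ≤ 0 := ContinuousMap.le_def.mpr fun t => by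
    simp only [ContinuousMap.add_apply, ContinuousMap.sub_apply, ContinuousMap.smul_apply,
      ContinuousMap.mul_apply, ContinuousMap.zero_apply, smul_eq_mul]
    linear_combination hΛΨ t
  have hΛΦ := map_nonpos Λ hΦ
  simp only [map_add, map_sub, map_smul, smul_eq_mul] at hΛΦ
  linear_combination hΛΦ / 2

end PositiveLinearMap

namespace ContinuousLinearMap

variable {E : Type*} [NormedAddCommGroup E] [InnerProductSpace ℂ E] [CompleteSpace E]

noncomputable def reApplyInnerSelfPositiveMap (x : E) : (E →L[ℂ] E) →ₚ[ℝ] ℝ :=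
  PositiveLinearMap.mk₀
    { toFun T := (⟪T x, x⟫_ℂ).re
      map_add' S T := by simp
      map_smul' c T := by simp }
    fun T hT => ((nonneg_iff_isPositive T).mp hT).re_inner_nonneg_left x

end ContinuousLinearMap

theorem stmt_6_general {H : Type*} [NormedAddCommGroup H] [InnerProductSpace ℂ H] [CompleteSpace H]
    (A : H →L[ℂ] H) (hA : IsSelfAdjoint A) (γ Γ : ℝ)
    (hspec : spectrum ℝ A ⊆ Set.Icc γ Γ)
    (h f g : ℝ → ℝ)
    (hh : ContinuousOn h (Set.Icc γ Γ))
    (hf : ContinuousOn f (Set.Icc γ Γ)) (hg : ContinuousOn g (Set.Icc γ Γ))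
    (hasync : ∀ s ∈ Set.Icc γ Γ, ∀ t ∈ Set.Icc γ Γ,
      (h t * f s - h s * f t) * (h t * g s - h s * g t) ≤ 0)
    (x : H) :
    (⟪((cfc h A) ^ 2) x, x⟫_ℂ).re * (⟪(cfc f A * cfc g A) x, x⟫_ℂ).re ≤
      (⟪(cfc h A * cfc g A) x, x⟫_ℂ).re * (⟪(cfc h A * cfc f A) x, x⟫_ℂ).re := by
  let Λ := (ContinuousLinearMap.reApplyInnerSelfPositiveMap x).comp
    (PositiveLinearMap.ofClass (R := ℝ) (cfcHom (R := ℝ) hA))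
  have hcfc (φ : ℝ → ℝ) (hφ : ContinuousOn φ (Set.Icc γ Γ)) :
      cfc φ A = cfcHom hA ⟨(spectrum ℝ A).domRestrict φ, (hφ.mono hspec).domRestrict⟩ :=
    cfc_apply φ A hA (hφ.mono hspec)
  rw [hcfc h hh, hcfc f hf, hcfc g hg, sq, ← map_mul, ← map_mul, ← map_mul, ← map_mul]
  exact Λ.mul_le_mul_of_asynchronous ⟨_, (hh.mono hspec).domRestrict⟩
    ⟨_, (hf.mono hspec).domRestrict⟩ ⟨_, (hg.mono hspec).domRestrict⟩
    fun s t => hasync s (hspec s.2) t (hspec t.2)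

theorem stmt_6 {H : Type*} [NormedAddCommGroup H] [InnerProductSpace ℂ H] [CompleteSpace H]
    (A : H →L[ℂ] H) (hA : IsSelfAdjoint A) (γ Γ : ℝ) (hγΓ : γ < Γ)
    (hspec : spectrum ℝ A ⊆ Set.Icc γ Γ)
    (h f g : ℝ → ℝ)
    (hh : ContinuousOn h (Set.Icc γ Γ)) (hh0 : ∀ t ∈ Set.Icc γ Γ, 0 ≤ h t)
    (hf : ContinuousOn f (Set.Icc γ Γ)) (hg : ContinuousOn g (Set.Icc γ Γ))
    (hasync : ∀ s ∈ Set.Icc γ Γ, ∀ t ∈ Set.Icc γ Γ,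
      (h t * f s - h s * f t) * (h t * g s - h s * g t) ≤ 0)
    (x : H) (hx : ‖x‖ = 1) :
    (⟪((cfc h A) ^ 2) x, x⟫_ℂ).re * (⟪(cfc f A * cfc g A) x, x⟫_ℂ).re ≤
      (⟪(cfc h A * cfc g A) x, x⟫_ℂ).re * (⟪(cfc h A * cfc f A) x, x⟫_ℂ).re :=
  stmt_6_general A hA γ Γ hspec h f g hh hf hg hasync x
end

section
/- Let A be a selfadjoint bounded operator with spectrum in [γ,Γ], 0 < γ < Γ. If f,g:[γ,Γ]→ℝ are continuous and t-synchronous on [γ,Γ] (i.e. (x f(y) − y f(x))(x g(y) − y g(x)) ≥ 0 for all x,y ∈ [γ,Γ]), then for every unit vector x ∈ H, ⟨A²x,x⟩⟨f(A)g(A)x,x⟩ ≥ ⟨A g(A)x,x⟩⟨A f(A)x,x⟩. -/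
/-!
For a positive linear functional `φ` on `C(X, ℝ)` and a kernel
`(a t * b s - a s * b t) * (c t * d s - c s * d t) ≥ 0`, applying `φ` in `t` for fixed `s` gives a
nonnegative function of `s`, which is a combination of `b * d`, `a * c`, `b * c`, `a * d` with
coefficients `φ (a * c)`, `φ (b * d)`, `-φ (a * d)`, `-φ (b * c)`; applying `φ` once more yields
`2 (φ (a * c) φ (b * d) - φ (a * d) φ (b * c)) ≥ 0`. The theorem is the case `a = c = id`, `b = f`,
`d = g` of the vector state `h ↦ Re ⟪h(A) x, x⟫`, which is positive on `C(σ(A), ℝ)` because the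
continuous functional calculus is order preserving.
-/

open scoped InnerProductSpace

theorem PositiveLinearMap.map_mul_mul_map_mul_le_of_synchronous {X : Type*} [TopologicalSpace X]
    (φ : C(X, ℝ) →ₚ[ℝ] ℝ) (a b c d : C(X, ℝ))
    (hsync : ∀ s t, 0 ≤ (a t * b s - a s * b t) * (c t * d s - c s * d t)) :
    φ (a * d) * φ (b * c) ≤ φ (a * c) * φ (b * d) := by
  have hslice : ∀ s, 0 ≤ b s * d s * φ (a * c) + a s * c s * φ (b * d)
      - b s * c s * φ (a * d) - a s * d s * φ (b * c) := by
    intro s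
    have hnonneg : 0 ≤ (b s * d s) • (a * c) + (a s * c s) • (b * d)
        - (b s * c s) • (a * d) - (a s * d s) • (b * c) := fun t => by
      refine (hsync s t).trans_eq ?_
      simp only [ContinuousMap.toFun_eq_coe, ContinuousMap.sub_apply, ContinuousMap.add_apply,
        ContinuousMap.coe_smul, ContinuousMap.coe_mul, Pi.smul_apply, Pi.mul_apply, smul_eq_mul]
      ring
    simpa only [map_sub, map_add, map_smul, smul_eq_mul] using φ.map_nonneg hnonneg
  have hnonneg : 0 ≤ φ (a * c) • (b * d) + φ (b * d) • (a * c)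
      - φ (a * d) • (b * c) - φ (b * c) • (a * d) := fun s => by
    refine (hslice s).trans_eq ?_
    simp only [ContinuousMap.toFun_eq_coe, ContinuousMap.sub_apply, ContinuousMap.add_apply,
      ContinuousMap.coe_smul, ContinuousMap.coe_mul, Pi.smul_apply, Pi.mul_apply, smul_eq_mul]
    ring
  have hφ := φ.map_nonneg hnonneg
  simp only [map_sub, map_add, map_smul, smul_eq_mul] at hφ
  linarith

section

variable {H : Type*} [NormedAddCommGroup H] [InnerProductSpace ℂ H] [CompleteSpace H]

noncomputable def cfcVectorState {A : H →L[ℂ] H} (hA : IsSelfAdjoint A) (x : H) :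
    C(spectrum ℝ A, ℝ) →ₚ[ℝ] ℝ :=
  .mk₀
    { toFun h := (⟪cfcHom hA h x, x⟫_ℂ).re
      map_add' h k := by simp
      map_smul' r h := by simp }
    fun h hh => by
      have := cfcHom_mono hA hh
      rw [map_zero, ContinuousLinearMap.nonneg_iff_isPositive] at this
      exact this.re_inner_nonneg_left x

lemma cfcVectorState_apply {A : H →L[ℂ] H} (hA : IsSelfAdjoint A) (x : H)
    (h : C(spectrum ℝ A, ℝ)) : cfcVectorState hA x h = (⟪cfcHom hA h x, x⟫_ℂ).re :=
  rfl

end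

theorem stmt_9_general {H : Type*} [NormedAddCommGroup H] [InnerProductSpace ℂ H] [CompleteSpace H]
    (A : H →L[ℂ] H) (hA : IsSelfAdjoint A) (γ Γ : ℝ)
    (hspec : spectrum ℝ A ⊆ Set.Icc γ Γ)
    (f g : ℝ → ℝ)
    (hf : ContinuousOn f (Set.Icc γ Γ)) (hg : ContinuousOn g (Set.Icc γ Γ))
    (hsync : ∀ s ∈ Set.Icc γ Γ, ∀ t ∈ Set.Icc γ Γ,
      0 ≤ (t * f s - s * f t) * (t * g s - s * g t))
    (x : H) :
    (⟪(A * cfc g A) x, x⟫_ℂ).re * (⟪(A * cfc f A) x, x⟫_ℂ).re ≤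
      (⟪(A ^ 2) x, x⟫_ℂ).re * (⟪(cfc f A * cfc g A) x, x⟫_ℂ).re := by
  let ι := (ContinuousMap.id ℝ).restrict (spectrum ℝ A)
  let F : C(spectrum ℝ A, ℝ) := ⟨_, (hf.mono hspec).domRestrict⟩
  let G : C(spectrum ℝ A, ℝ) := ⟨_, (hg.mono hspec).domRestrict⟩
  have hι : cfcHom hA ι = A := cfcHom_id hA
  have hF : cfcHom hA F = cfc f A := (cfc_apply f A hA (hf.mono hspec)).symm
  have hG : cfcHom hA G = cfc g A := (cfc_apply g A hA (hg.mono hspec)).symm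
  have key := (cfcVectorState hA x).map_mul_mul_map_mul_le_of_synchronous ι F ι G
    fun s t => hsync s (hspec s.2) t (hspec t.2)
  rw [mul_comm F ι] at key
  simpa only [cfcVectorState_apply, map_mul, hι, hF, hG, pow_two] using key

theorem stmt_9 {H : Type*} [NormedAddCommGroup H] [InnerProductSpace ℂ H] [CompleteSpace H]
    (A : H →L[ℂ] H) (hA : IsSelfAdjoint A) (γ Γ : ℝ) (hγ : 0 < γ) (hγΓ : γ < Γ)
    (hspec : spectrum ℝ A ⊆ Set.Icc γ Γ)
    (f g : ℝ → ℝ)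
    (hf : ContinuousOn f (Set.Icc γ Γ)) (hg : ContinuousOn g (Set.Icc γ Γ))
    (hsync : ∀ s ∈ Set.Icc γ Γ, ∀ t ∈ Set.Icc γ Γ,
      0 ≤ (t * f s - s * f t) * (t * g s - s * g t))
    (x : H) (hx : ‖x‖ = 1) :
    (⟪(A * cfc g A) x, x⟫_ℂ).re * (⟪(A * cfc f A) x, x⟫_ℂ).re ≤
      (⟪(A ^ 2) x, x⟫_ℂ).re * (⟪(cfc f A * cfc g A) x, x⟫_ℂ).re :=
  stmt_9_general A hA γ Γ hspec f g hf hg hsync x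
end

section
/- Let A, B be selfadjoint bounded operators with spectra contained in [γ,Γ], h:[γ,Γ]→ℝ₊ continuous nonnegative, and f,g:[γ,Γ]→ℝ continuous and h-synchronous. Then for all unit vectors x, y ∈ H: ⟨h(B)²y,y⟩⟨f(A)g(A)x,x⟩ + ⟨h(A)²x,x⟩⟨f(B)g(B)y,y⟩ ≥ ⟨h(B)g(B)y,y⟩⟨h(A)f(A)x,x⟩ + ⟨h(A)g(A)x,x⟩⟨h(B)f(B)y,y⟩. -/
open scoped InnerProductSpace

/-!
For an operator `T` and a vector `z`, the map `φ ↦ re ⟪φ(T) z, z⟫` is a positive linear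
functional on functions continuous on the spectrum of `T`. Expanding the `h`-synchronicity
condition gives, for fixed `t`, an inequality between functions of `s`; applying the form of `A`
at `x` in `s` turns it into an inequality between functions of `t`, to which the form of `B` at
`y` is applied.
-/

section QuadraticForm

variable {H : Type*} [NormedAddCommGroup H] [InnerProductSpace ℂ H] [CompleteSpace H]
  {T : H →L[ℂ] H}

lemma re_inner_cfc_mono {φ ψ : ℝ → ℝ} (hle : ∀ t ∈ spectrum ℝ T, φ t ≤ ψ t)
    (hφ : ContinuousOn φ (spectrum ℝ T)) (hψ : ContinuousOn ψ (spectrum ℝ T)) (z : H) :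
    (⟪cfc φ T z, z⟫_ℂ).re ≤ (⟪cfc ψ T z, z⟫_ℂ).re := by
  have hpos := ((ContinuousLinearMap.le_def _ _).mp (cfc_mono hle hφ hψ)).re_inner_nonneg_left z
  simpa [inner_sub_left] using hpos

lemma re_inner_cfc_linear_combination (a b : ℝ) {φ ψ : ℝ → ℝ}
    (hφ : ContinuousOn φ (spectrum ℝ T)) (hψ : ContinuousOn ψ (spectrum ℝ T)) (z : H) :
    (⟪cfc (fun t => a * φ t + b * ψ t) T z, z⟫_ℂ).re
      = a * (⟪cfc φ T z, z⟫_ℂ).re + b * (⟪cfc ψ T z, z⟫_ℂ).re := by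
  rw [cfc_add (R := ℝ) (a := T) _ _ (by fun_prop) (by fun_prop), cfc_const_mul a φ T hφ,
    cfc_const_mul b ψ T hψ]
  simp only [add_apply, smul_apply, inner_add_left,
    inner_smul_left_eq_smul, Complex.add_re, Complex.real_smul, Complex.re_ofReal_mul]

lemma re_inner_cfc_linear_combination_le {s : Set ℝ} (hs : spectrum ℝ T ⊆ s)
    {p q u v : ℝ → ℝ} {a b c d : ℝ} (hp : ContinuousOn p s) (hq : ContinuousOn q s)
    (hu : ContinuousOn u s) (hv : ContinuousOn v s)
    (hle : ∀ t ∈ s, c * p t + d * q t ≤ a * u t + b * v t) (z : H) :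
    c * (⟪cfc p T z, z⟫_ℂ).re + d * (⟪cfc q T z, z⟫_ℂ).re
      ≤ a * (⟪cfc u T z, z⟫_ℂ).re + b * (⟪cfc v T z, z⟫_ℂ).re := by
  replace hp := hp.mono hs
  replace hq := hq.mono hs
  replace hu := hu.mono hs
  replace hv := hv.mono hs
  rw [← re_inner_cfc_linear_combination c d hp hq, ← re_inner_cfc_linear_combination a b hu hv]
  exact re_inner_cfc_mono (fun t ht => hle t (hs ht)) (by fun_prop) (by fun_prop) z

end QuadraticForm

theorem stmt_11_general {H : Type*} [NormedAddCommGroup H] [InnerProductSpace ℂ H] [CompleteSpace H]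
    (A B : H →L[ℂ] H) (γ Γ : ℝ)
    (hspecA : spectrum ℝ A ⊆ Set.Icc γ Γ) (hspecB : spectrum ℝ B ⊆ Set.Icc γ Γ)
    (h f g : ℝ → ℝ)
    (hh : ContinuousOn h (Set.Icc γ Γ))
    (hf : ContinuousOn f (Set.Icc γ Γ)) (hg : ContinuousOn g (Set.Icc γ Γ))
    (hsync : ∀ s ∈ Set.Icc γ Γ, ∀ t ∈ Set.Icc γ Γ,
      0 ≤ (h t * f s - h s * f t) * (h t * g s - h s * g t))
    (x y : H) :
    (⟪(cfc h B * cfc g B) y, y⟫_ℂ).re * (⟪(cfc h A * cfc f A) x, x⟫_ℂ).re +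
        (⟪(cfc h A * cfc g A) x, x⟫_ℂ).re * (⟪(cfc h B * cfc f B) y, y⟫_ℂ).re ≤
      (⟪((cfc h B) ^ 2) y, y⟫_ℂ).re * (⟪(cfc f A * cfc g A) x, x⟫_ℂ).re +
        (⟪((cfc h A) ^ 2) x, x⟫_ℂ).re * (⟪(cfc f B * cfc g B) y, y⟫_ℂ).re := by
  have hmul : ∀ T : H →L[ℂ] H, spectrum ℝ T ⊆ Set.Icc γ Γ → ∀ p q : ℝ → ℝ,
      ContinuousOn p (Set.Icc γ Γ) → ContinuousOn q (Set.Icc γ Γ) →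
      cfc p T * cfc q T = cfc (fun s => p s * q s) T :=
    fun T hT p q hp hq => (cfc_mul p q T (hp.mono hT) (hq.mono hT)).symm
  rw [sq, sq, hmul A hspecA h f hh hf, hmul A hspecA h g hh hg, hmul A hspecA f g hf hg,
    hmul A hspecA h h hh hh, hmul B hspecB h f hh hf, hmul B hspecB h g hh hg,
    hmul B hspecB f g hf hg, hmul B hspecB h h hh hh]
  have hA_form : ∀ t ∈ Set.Icc γ Γ,
      h t * g t * (⟪cfc (fun s => h s * f s) A x, x⟫_ℂ).re
        + h t * f t * (⟪cfc (fun s => h s * g s) A x, x⟫_ℂ).re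
      ≤ h t * h t * (⟪cfc (fun s => f s * g s) A x, x⟫_ℂ).re
        + f t * g t * (⟪cfc (fun s => h s * h s) A x, x⟫_ℂ).re := fun t ht =>
    re_inner_cfc_linear_combination_le hspecA (hh.fun_mul hf) (hh.fun_mul hg) (hf.fun_mul hg)
      (hh.fun_mul hh) (fun s hs => by linear_combination hsync s hs t ht) x
  have hB_form :
      (⟪cfc (fun s => h s * f s) A x, x⟫_ℂ).re
          * (⟪cfc (fun t => h t * g t) B y, y⟫_ℂ).re
        + (⟪cfc (fun s => h s * g s) A x, x⟫_ℂ).re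
          * (⟪cfc (fun t => h t * f t) B y, y⟫_ℂ).re
      ≤ (⟪cfc (fun s => f s * g s) A x, x⟫_ℂ).re
          * (⟪cfc (fun t => h t * h t) B y, y⟫_ℂ).re
        + (⟪cfc (fun s => h s * h s) A x, x⟫_ℂ).re
          * (⟪cfc (fun t => f t * g t) B y, y⟫_ℂ).re :=
    re_inner_cfc_linear_combination_le hspecB (hh.fun_mul hg) (hh.fun_mul hf) (hh.fun_mul hh)
      (hf.fun_mul hg) (fun t ht => by linear_combination hA_form t ht) y
  linarith

theorem stmt_11 {H : Type*} [NormedAddCommGroup H] [InnerProductSpace ℂ H] [CompleteSpace H]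
    (A B : H →L[ℂ] H) (hA : IsSelfAdjoint A) (hB : IsSelfAdjoint B) (γ Γ : ℝ) (hγΓ : γ < Γ)
    (hspecA : spectrum ℝ A ⊆ Set.Icc γ Γ) (hspecB : spectrum ℝ B ⊆ Set.Icc γ Γ)
    (h f g : ℝ → ℝ)
    (hh : ContinuousOn h (Set.Icc γ Γ)) (hh0 : ∀ t ∈ Set.Icc γ Γ, 0 ≤ h t)
    (hf : ContinuousOn f (Set.Icc γ Γ)) (hg : ContinuousOn g (Set.Icc γ Γ))
    (hsync : ∀ s ∈ Set.Icc γ Γ, ∀ t ∈ Set.Icc γ Γ,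
      0 ≤ (h t * f s - h s * f t) * (h t * g s - h s * g t))
    (x y : H) (hx : ‖x‖ = 1) (hy : ‖y‖ = 1) :
    (⟪(cfc h B * cfc g B) y, y⟫_ℂ).re * (⟪(cfc h A * cfc f A) x, x⟫_ℂ).re +
        (⟪(cfc h A * cfc g A) x, x⟫_ℂ).re * (⟪(cfc h B * cfc f B) y, y⟫_ℂ).re ≤
      (⟪((cfc h B) ^ 2) y, y⟫_ℂ).re * (⟪(cfc f A * cfc g A) x, x⟫_ℂ).re +
        (⟪((cfc h A) ^ 2) x, x⟫_ℂ).re * (⟪(cfc f B * cfc g B) y, y⟫_ℂ).re :=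
  stmt_11_general A B γ Γ hspecA hspecB h f g hh hf hg hsync x y
end

section
/- Let A, B be selfadjoint operators with spectra in [γ,Γ] ⊂ (0,∞) and p, q, r real numbers with p, q > r > 0. Then for all unit vectors x, y ∈ H: ⟨B^{2r}y,y⟩⟨A^{p+q}x,x⟩ + ⟨A^{2r}x,x⟩⟨B^{p+q}y,y⟩ ≥ ⟨B^{q+r}y,y⟩⟨A^{p+r}x,x⟩ + ⟨A^{q+r}x,x⟩⟨B^{p+r}y,y⟩. -/
/-!
For `s, t` in the spectra, `h`-synchronicity of `f` and `g` says that
`(f t * h s - f s * h t) * (g t * h s - g s * h t)`, a sum of four products `u i s * v i t`, is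
nonnegative. The functionals `φ ↦ re ⟪φ(A) x, x⟫` and `ψ ↦ re ⟪ψ(B) y, y⟫` are linear and positive
on functions continuous on the spectrum, so applying the first in `t` and then the second in `s`
keeps the expression nonnegative; expanded, this is the inequality. The powers `t ^ p`, `t ^ q` are
`t ^ r`-synchronous on `(0, ∞)` because the product above equals
`(s ^ r * t ^ r) ^ 2 * (t ^ (p - r) - s ^ (p - r)) * (t ^ (q - r) - s ^ (q - r))`, and `p, q ≥ r`.
-/

open scoped InnerProductSpace

/-- `f` and `g` are `h`-synchronous on `S`; for positive `h` this says that `f / h` and `g / h`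
monovary on `S`. -/
def HSynchronousOn (h f g : ℝ → ℝ) (S : Set ℝ) : Prop :=
  ∀ s ∈ S, ∀ t ∈ S, 0 ≤ (f t * h s - f s * h t) * (g t * h s - g s * h t)

lemma Real.rpow_mul_rpow_sub_rpow_mul_rpow {s t : ℝ} (hs : 0 < s) (ht : 0 < t) (p r : ℝ) :
    t ^ p * s ^ r - s ^ p * t ^ r = s ^ r * t ^ r * (t ^ (p - r) - s ^ (p - r)) := by
  rw [Real.rpow_sub hs, Real.rpow_sub ht]
  field_simp

lemma hSynchronousOn_rpow {p q r : ℝ} (hpr : r ≤ p) (hqr : r ≤ q) :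
    HSynchronousOn (· ^ r) (· ^ p) (· ^ q) (Set.Ioi 0) := by
  intro s hs t ht
  have hmono : MonovaryOn (fun u : ℝ => u ^ (p - r)) (fun u : ℝ => u ^ (q - r)) (Set.Ici 0) :=
    (Real.monotoneOn_rpow_Ici_of_exponent_nonneg (sub_nonneg.2 hpr)).monovaryOn
      (Real.monotoneOn_rpow_Ici_of_exponent_nonneg (sub_nonneg.2 hqr))
  have hst := hmono.sub_mul_sub_nonneg (Set.mem_Ici.2 (le_of_lt hs)) (Set.mem_Ici.2 (le_of_lt ht))
  rw [Real.rpow_mul_rpow_sub_rpow_mul_rpow hs ht, Real.rpow_mul_rpow_sub_rpow_mul_rpow hs ht]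
  exact (mul_nonneg (mul_self_nonneg (s ^ r * t ^ r)) hst).trans_eq (by ring)

lemma cfc_rpow_mul_rpow {𝒜 : Type*} {P : 𝒜 → Prop} [TopologicalSpace 𝒜] [Ring 𝒜] [StarRing 𝒜]
    [Algebra ℝ 𝒜] [ContinuousFunctionalCalculus ℝ 𝒜 P] {a : 𝒜} (ha : spectrum ℝ a ⊆ Set.Ioi 0)
    (b c : ℝ) : cfc (fun t : ℝ => t ^ b * t ^ c) a = cfc (fun t : ℝ => t ^ (b + c)) a :=
  cfc_congr fun _ ht => (Real.rpow_add (ha ht) b c).symm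

section
variable {H : Type*} [NormedAddCommGroup H] [InnerProductSpace ℂ H] [CompleteSpace H]

lemma re_inner_cfc_nonneg {A : H →L[ℂ] H} {f : ℝ → ℝ} (hf : ∀ t ∈ spectrum ℝ A, 0 ≤ f t)
    (x : H) : 0 ≤ (⟪cfc f A x, x⟫_ℂ).re :=
  ((ContinuousLinearMap.nonneg_iff_isPositive _).mp (cfc_nonneg hf)).re_inner_nonneg_left x

lemma re_inner_cfc_sum {ι : Type*} (s : Finset ι) (c : ι → ℝ) (f : ι → ℝ → ℝ) (A : H →L[ℂ] H)
    (hf : ∀ i ∈ s, ContinuousOn (f i) (spectrum ℝ A)) (x : H) :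
    (⟪cfc (fun t => ∑ i ∈ s, c i * f i t) A x, x⟫_ℂ).re =
      ∑ i ∈ s, c i * (⟪cfc (f i) A x, x⟫_ℂ).re := by
  have hsum : cfc (fun t => ∑ i ∈ s, c i * f i t) A = ∑ i ∈ s, c i • cfc (f i) A := by
    rw [← Finset.sum_congr rfl fun i hi => cfc_const_mul (c i) (f i) A (hf i hi),
      ← cfc_sum (fun i t => c i * f i t) A s fun i hi => continuousOn_const.mul (hf i hi),
      Finset.sum_fn]
  simp only [hsum, FunLike.coe_sum, Finset.sum_apply, FunLike.coe_smul, Pi.smul_apply, sum_inner,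
    inner_smul_left_eq_smul, Complex.re_sum, Complex.smul_re, smul_eq_mul]

lemma sum_mul_re_inner_cfc_nonneg {ι : Type*} (s : Finset ι) (c : ι → ℝ) (f g : ι → ℝ → ℝ)
    {A B : H →L[ℂ] H} (hf : ∀ i ∈ s, ContinuousOn (f i) (spectrum ℝ A))
    (hg : ∀ i ∈ s, ContinuousOn (g i) (spectrum ℝ B))
    (hfg : ∀ u ∈ spectrum ℝ B, ∀ t ∈ spectrum ℝ A, 0 ≤ ∑ i ∈ s, c i * g i u * f i t)
    (x y : H) :
    0 ≤ ∑ i ∈ s, c i * (⟪cfc (g i) B y, y⟫_ℂ).re * (⟪cfc (f i) A x, x⟫_ℂ).re := by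
  have hφA : ∀ u ∈ spectrum ℝ B,
      0 ≤ ∑ i ∈ s, c i * (⟪cfc (f i) A x, x⟫_ℂ).re * g i u := by
    intro u hu
    have := re_inner_cfc_nonneg (hfg u hu) x
    rw [re_inner_cfc_sum s (fun i => c i * g i u) f A hf] at this
    simpa only [mul_right_comm] using this
  have := re_inner_cfc_nonneg hφA y
  rw [re_inner_cfc_sum s _ g B hg] at this
  simpa only [mul_right_comm] using this

theorem re_inner_cfc_le_of_hSynchronousOn {h f g : ℝ → ℝ} {S : Set ℝ}
    (hsync : HSynchronousOn h f g S) (hh : ContinuousOn h S) (hf : ContinuousOn f S)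
    (hg : ContinuousOn g S) {A B : H →L[ℂ] H} (hAS : spectrum ℝ A ⊆ S)
    (hBS : spectrum ℝ B ⊆ S) (x y : H) :
    (⟪cfc (fun t => g t * h t) B y, y⟫_ℂ).re * (⟪cfc (fun t => f t * h t) A x, x⟫_ℂ).re +
        (⟪cfc (fun t => g t * h t) A x, x⟫_ℂ).re * (⟪cfc (fun t => f t * h t) B y, y⟫_ℂ).re ≤
      (⟪cfc (fun t => h t * h t) B y, y⟫_ℂ).re * (⟪cfc (fun t => f t * g t) A x, x⟫_ℂ).re +
        (⟪cfc (fun t => h t * h t) A x, x⟫_ℂ).re * (⟪cfc (fun t => f t * g t) B y, y⟫_ℂ).re := by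
  have key := sum_mul_re_inner_cfc_nonneg (A := A) (B := B) Finset.univ ![1, 1, -1, -1]
    ![fun t => f t * g t, fun t => h t * h t, fun t => f t * h t, fun t => g t * h t]
    ![fun t => h t * h t, fun t => f t * g t, fun t => g t * h t, fun t => f t * h t]
    (fun i _ => by
      fin_cases i <;> [exact (hf.mul hg).mono hAS; exact (hh.mul hh).mono hAS;
        exact (hf.mul hh).mono hAS; exact (hg.mul hh).mono hAS])
    (fun i _ => by
      fin_cases i <;> [exact (hh.mul hh).mono hBS; exact (hf.mul hg).mono hBS;
        exact (hg.mul hh).mono hBS; exact (hf.mul hh).mono hBS])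
    (fun u hu t ht => by
      have := hsync u (hBS hu) t (hAS ht)
      simp only [Fin.sum_univ_four, Fin.isValue, Matrix.cons_val_zero, Matrix.cons_val_one,
        Matrix.cons_val, one_mul, neg_mul]
      linarith) x y
  simp only [Fin.sum_univ_four, Fin.isValue, Matrix.cons_val_zero, Matrix.cons_val_one,
    Matrix.cons_val, one_mul, neg_mul, le_add_neg_iff_add_le, zero_add] at key
  linarith
end

theorem stmt_12_general {H : Type*} [NormedAddCommGroup H] [InnerProductSpace ℂ H] [CompleteSpace H]
    (A B : H →L[ℂ] H) (γ Γ : ℝ)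
    (hγ : 0 < γ)
    (hspecA : spectrum ℝ A ⊆ Set.Icc γ Γ) (hspecB : spectrum ℝ B ⊆ Set.Icc γ Γ)
    (p q r : ℝ) (hpr : r < p) (hqr : r < q)
    (x y : H) :
    (⟪(cfc (fun t : ℝ => t ^ (q + r)) B) y, y⟫_ℂ).re *
          (⟪(cfc (fun t : ℝ => t ^ (p + r)) A) x, x⟫_ℂ).re +
        (⟪(cfc (fun t : ℝ => t ^ (q + r)) A) x, x⟫_ℂ).re *
          (⟪(cfc (fun t : ℝ => t ^ (p + r)) B) y, y⟫_ℂ).re ≤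
      (⟪(cfc (fun t : ℝ => t ^ (2 * r)) B) y, y⟫_ℂ).re *
          (⟪(cfc (fun t : ℝ => t ^ (p + q)) A) x, x⟫_ℂ).re +
        (⟪(cfc (fun t : ℝ => t ^ (2 * r)) A) x, x⟫_ℂ).re *
          (⟪(cfc (fun t : ℝ => t ^ (p + q)) B) y, y⟫_ℂ).re := by
  have hA_pos : spectrum ℝ A ⊆ Set.Ioi 0 := fun t ht => hγ.trans_le (hspecA ht).1
  have hB_pos : spectrum ℝ B ⊆ Set.Ioi 0 := fun t ht => hγ.trans_le (hspecB ht).1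
  have hcont (e : ℝ) : ContinuousOn (· ^ e) (Set.Ioi (0 : ℝ)) := fun t ht =>
    (Real.continuousAt_rpow_const t e (Or.inl ht.ne')).continuousWithinAt
  have key := re_inner_cfc_le_of_hSynchronousOn (hSynchronousOn_rpow hpr.le hqr.le)
    (hcont r) (hcont p) (hcont q) hA_pos hB_pos x y
  simp only [cfc_rpow_mul_rpow hA_pos, cfc_rpow_mul_rpow hB_pos] at key
  rwa [two_mul]

theorem stmt_12 {H : Type*} [NormedAddCommGroup H] [InnerProductSpace ℂ H] [CompleteSpace H]
    (A B : H →L[ℂ] H) (hA : IsSelfAdjoint A) (hB : IsSelfAdjoint B) (γ Γ : ℝ)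
    (hγ : 0 < γ) (hγΓ : γ < Γ)
    (hspecA : spectrum ℝ A ⊆ Set.Icc γ Γ) (hspecB : spectrum ℝ B ⊆ Set.Icc γ Γ)
    (p q r : ℝ) (hpr : r < p) (hqr : r < q) (hr : 0 < r)
    (x y : H) (hx : ‖x‖ = 1) (hy : ‖y‖ = 1) :
    (⟪(cfc (fun t : ℝ => t ^ (q + r)) B) y, y⟫_ℂ).re *
          (⟪(cfc (fun t : ℝ => t ^ (p + r)) A) x, x⟫_ℂ).re +
        (⟪(cfc (fun t : ℝ => t ^ (q + r)) A) x, x⟫_ℂ).re *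
          (⟪(cfc (fun t : ℝ => t ^ (p + r)) B) y, y⟫_ℂ).re ≤
      (⟪(cfc (fun t : ℝ => t ^ (2 * r)) B) y, y⟫_ℂ).re *
          (⟪(cfc (fun t : ℝ => t ^ (p + q)) A) x, x⟫_ℂ).re +
        (⟪(cfc (fun t : ℝ => t ^ (2 * r)) A) x, x⟫_ℂ).re *
          (⟪(cfc (fun t : ℝ => t ^ (p + q)) B) y, y⟫_ℂ).re :=
  stmt_12_general A B γ Γ hγ hspecA hspecB p q r hpr hqr x y
end

section
/- Let A, B be selfadjoint operators with spectra in [γ,Γ] and r ∈ ℝ (with γ > 0 if r requires positivity). Then for all unit vectors x, y ∈ H: ⟨B^{2r}y,y⟩⟨exp(2A)x,x⟩ + ⟨A^{2r}x,x⟩⟨exp(2B)y,y⟩ ≥ 2⟨A^r exp(A)x,x⟩⟨B^r exp(B)y,y⟩. -/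
/-! With `u = A^r x` and `v = exp(A) x`, self-adjointness of the functional calculus gives
`⟨A^{2r}x,x⟩ = ‖u‖²`, `⟨exp(2A)x,x⟩ = ‖v‖²` and `⟨A^r exp(A)x,x⟩ = ⟨v,u⟩`, so the latter is at most
`‖u‖‖v‖` by Cauchy–Schwarz. Doing the same for `B` and `y`, the inequality reduces to
`2 ‖u‖‖v‖‖u'‖‖v'‖ ≤ ‖u'‖²‖v‖² + ‖u‖²‖v'‖²`, which is AM–GM. -/

open scoped InnerProductSpace

lemma two_mul_mul_le_of_abs_le_mul {a b u v u' v' : ℝ} (ha : |a| ≤ u * v) (hb : |b| ≤ u' * v') :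
    2 * (a * b) ≤ u' ^ 2 * v ^ 2 + u ^ 2 * v' ^ 2 := calc
  2 * (a * b) ≤ 2 * (|a| * |b|) := by rw [← abs_mul]; gcongr; exact le_abs_self _
  _ ≤ 2 * ((u * v) * (u' * v')) := by gcongr; exact (abs_nonneg a).trans ha
  _ ≤ u' ^ 2 * v ^ 2 + u ^ 2 * v' ^ 2 := by nlinarith [sq_nonneg (u' * v - u * v')]

lemma continuousOn_rpow_const_of_forall_pos {s : Set ℝ} (hs : ∀ t ∈ s, 0 < t) (r : ℝ) :
    ContinuousOn (fun t : ℝ => t ^ r) s :=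
  continuousOn_id.rpow_const fun t ht => Or.inl (hs t ht).ne'

section InnerCFC

variable {H : Type*} [NormedAddCommGroup H] [InnerProductSpace ℂ H] [CompleteSpace H]
  {A : H →L[ℂ] H}

lemma inner_cfc_mul_apply {f g : ℝ → ℝ}
    (hf : ContinuousOn f (spectrum ℝ A)) (hg : ContinuousOn g (spectrum ℝ A)) (x y : H) :
    ⟪cfc (fun t => f t * g t) A x, y⟫_ℂ = ⟪cfc g A x, cfc f A y⟫_ℂ := by
  rw [cfc_mul f g A]
  exact (cfc_predicate f A).isSymmetric _ _

lemma abs_re_inner_cfc_mul_le {f g : ℝ → ℝ}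
    (hf : ContinuousOn f (spectrum ℝ A)) (hg : ContinuousOn g (spectrum ℝ A)) (x : H) :
    |(⟪cfc (fun t => f t * g t) A x, x⟫_ℂ).re| ≤ ‖cfc f A x‖ * ‖cfc g A x‖ := by
  rw [inner_cfc_mul_apply hf hg, mul_comm]
  exact (Complex.abs_re_le_norm _).trans (norm_inner_le_norm _ _)

lemma re_inner_cfc_mul_self {f : ℝ → ℝ} (hf : ContinuousOn f (spectrum ℝ A)) (x : H) :
    (⟪cfc (fun t => f t * f t) A x, x⟫_ℂ).re = ‖cfc f A x‖ ^ 2 := by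
  rw [inner_cfc_mul_apply hf hf]
  exact inner_self_eq_norm_sq (𝕜 := ℂ) _

lemma re_inner_cfc_rpow_two_mul (hpos : ∀ t ∈ spectrum ℝ A, 0 < t) (r : ℝ) (x : H) :
    (⟪cfc (fun t : ℝ => t ^ (2 * r)) A x, x⟫_ℂ).re = ‖cfc (fun t : ℝ => t ^ r) A x‖ ^ 2 := by
  rw [← re_inner_cfc_mul_self (continuousOn_rpow_const_of_forall_pos hpos r)]
  congr 3
  exact cfc_congr fun t ht => by rw [two_mul, Real.rpow_add (hpos t ht)]

lemma re_inner_cfc_exp_two_mul (x : H) :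
    (⟪cfc (fun t : ℝ => Real.exp (2 * t)) A x, x⟫_ℂ).re = ‖cfc Real.exp A x‖ ^ 2 := by
  rw [← re_inner_cfc_mul_self Real.continuous_exp.continuousOn]
  simp only [two_mul, Real.exp_add]

end InnerCFC

theorem stmt_13_general {H : Type*} [NormedAddCommGroup H] [InnerProductSpace ℂ H] [CompleteSpace H]
    (A B : H →L[ℂ] H) (γ Γ : ℝ)
    (hγ : 0 < γ)
    (hspecA : spectrum ℝ A ⊆ Set.Icc γ Γ) (hspecB : spectrum ℝ B ⊆ Set.Icc γ Γ)
    (r : ℝ) (x y : H) :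
    2 * ((⟪(cfc (fun t : ℝ => t ^ r * Real.exp t) A) x, x⟫_ℂ).re *
          (⟪(cfc (fun t : ℝ => t ^ r * Real.exp t) B) y, y⟫_ℂ).re) ≤
      (⟪(cfc (fun t : ℝ => t ^ (2 * r)) B) y, y⟫_ℂ).re *
          (⟪(cfc (fun t : ℝ => Real.exp (2 * t)) A) x, x⟫_ℂ).re +
        (⟪(cfc (fun t : ℝ => t ^ (2 * r)) A) x, x⟫_ℂ).re *
          (⟪(cfc (fun t : ℝ => Real.exp (2 * t)) B) y, y⟫_ℂ).re := by
  have hApos : ∀ t ∈ spectrum ℝ A, 0 < t := fun t ht => hγ.trans_le (hspecA ht).1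
  have hBpos : ∀ t ∈ spectrum ℝ B, 0 < t := fun t ht => hγ.trans_le (hspecB ht).1
  rw [re_inner_cfc_rpow_two_mul hApos, re_inner_cfc_rpow_two_mul hBpos,
    re_inner_cfc_exp_two_mul, re_inner_cfc_exp_two_mul]
  exact two_mul_mul_le_of_abs_le_mul
    (abs_re_inner_cfc_mul_le (continuousOn_rpow_const_of_forall_pos hApos r)
      Real.continuous_exp.continuousOn x)
    (abs_re_inner_cfc_mul_le (continuousOn_rpow_const_of_forall_pos hBpos r)
      Real.continuous_exp.continuousOn y)

theorem stmt_13 {H : Type*} [NormedAddCommGroup H] [InnerProductSpace ℂ H] [CompleteSpace H]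
    (A B : H →L[ℂ] H) (hA : IsSelfAdjoint A) (hB : IsSelfAdjoint B) (γ Γ : ℝ)
    (hγ : 0 < γ) (hγΓ : γ < Γ)
    (hspecA : spectrum ℝ A ⊆ Set.Icc γ Γ) (hspecB : spectrum ℝ B ⊆ Set.Icc γ Γ)
    (r : ℝ) (x y : H) (hx : ‖x‖ = 1) (hy : ‖y‖ = 1) :
    2 * ((⟪(cfc (fun t : ℝ => t ^ r * Real.exp t) A) x, x⟫_ℂ).re *
          (⟪(cfc (fun t : ℝ => t ^ r * Real.exp t) B) y, y⟫_ℂ).re) ≤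
      (⟪(cfc (fun t : ℝ => t ^ (2 * r)) B) y, y⟫_ℂ).re *
          (⟪(cfc (fun t : ℝ => Real.exp (2 * t)) A) x, x⟫_ℂ).re +
        (⟪(cfc (fun t : ℝ => t ^ (2 * r)) A) x, x⟫_ℂ).re *
          (⟪(cfc (fun t : ℝ => Real.exp (2 * t)) B) y, y⟫_ℂ).re :=
  stmt_13_general A B γ Γ hγ hspecA hspecB r x y
end

section
/- Let A₁,…,Aₙ be selfadjoint bounded operators with spectra in [γ,Γ], h:[γ,Γ]→ℝ₊ continuous nonnegative, and f,g:[γ,Γ]→ℝ continuous and h-synchronous. Then for vectors x₁,…,xₙ ∈ H with Σⱼ‖xⱼ‖² = 1: (Σⱼ⟨h(Aⱼ)²xⱼ,xⱼ⟩)(Σⱼ⟨f(Aⱼ)g(Aⱼ)xⱼ,xⱼ⟩) ≥ (Σⱼ⟨h(Aⱼ)g(Aⱼ)xⱼ,xⱼ⟩)(Σⱼ⟨h(Aⱼ)f(Aⱼ)xⱼ,xⱼ⟩). -/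
/-!
The sum `Φ φ = ∑ j, re ⟪φ(Aⱼ) xⱼ, xⱼ⟫` is the vector functional of the block-diagonal operator
`diag(A₁, …, Aₙ)` on `Hⁿ` at `(x₁, …, xₙ)`, composed with its functional calculus; so it is a
positive linear functional on `C([γ, Γ], ℝ)`. For fixed `t`, applying `Φ` to the nonnegative
function `s ↦ (h t f s - h s f t) (h t g s - h s g t)` shows that a certain linear combination of
`h², hf, hg, fg` is nonnegative; applying `Φ` once more gives
`2 (Φ(h²) Φ(fg) - Φ(hf) Φ(hg)) ≥ 0`.
-/

open scoped InnerProductSpace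

theorem PositiveLinearMap.sum_apply {ι R E₁ E₂ : Type*} [Semiring R] [AddCommMonoid E₁]
    [PartialOrder E₁] [AddCommMonoid E₂] [PartialOrder E₂] [IsOrderedAddMonoid E₂]
    [Module R E₁] [Module R E₂] (s : Finset ι) (φ : ι → E₁ →ₚ[R] E₂) (x : E₁) :
    (∑ i ∈ s, φ i) x = ∑ i ∈ s, φ i x := by
  classical
  induction s using Finset.induction_on with
  | empty => rfl
  | insert i s hi ih => simp only [Finset.sum_insert hi, add_apply, ih]

theorem PositiveLinearMap.mul_le_mul_of_synchronous {K : Type*} [TopologicalSpace K]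
    (Φ : C(K, ℝ) →ₚ[ℝ] ℝ) (h f g : C(K, ℝ))
    (hsync : ∀ s t, 0 ≤ (h t * f s - h s * f t) * (h t * g s - h s * g t)) :
    Φ (h * g) * Φ (h * f) ≤ Φ (h ^ 2) * Φ (f * g) := by
  have hΦsync : ∀ t, 0 ≤ h t ^ 2 * Φ (f * g) - h t * g t * Φ (h * f) -
      h t * f t * Φ (h * g) + f t * g t * Φ (h ^ 2) := by
    intro t
    have hnonneg : 0 ≤ h t ^ 2 • (f * g) - (h t * g t) • (h * f) - (h t * f t) • (h * g) +
        (f t * g t) • h ^ 2 := fun s => by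
      simp only [ContinuousMap.toFun_eq_coe, ContinuousMap.zero_apply, ContinuousMap.add_apply,
        ContinuousMap.sub_apply, ContinuousMap.coe_smul, ContinuousMap.coe_mul,
        ContinuousMap.coe_pow, Pi.smul_apply, Pi.mul_apply, Pi.pow_apply, smul_eq_mul]
      linarith [hsync s t]
    simpa only [map_add, map_sub, map_smul, smul_eq_mul] using Φ.map_nonneg hnonneg
  have hnonneg : 0 ≤ Φ (f * g) • h ^ 2 - Φ (h * f) • (h * g) - Φ (h * g) • (h * f) +
      Φ (h ^ 2) • (f * g) := fun t => by
    simp only [ContinuousMap.toFun_eq_coe, ContinuousMap.zero_apply, ContinuousMap.add_apply,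
      ContinuousMap.sub_apply, ContinuousMap.coe_smul, ContinuousMap.coe_mul,
      ContinuousMap.coe_pow, Pi.smul_apply, Pi.mul_apply, Pi.pow_apply, smul_eq_mul]
    linarith [hΦsync t]
  have := Φ.map_nonneg hnonneg
  simp only [map_add, map_sub, map_smul, smul_eq_mul] at this
  linarith

section cfcHomOn

variable {R A : Type*} {p : A → Prop} [CommSemiring R] [StarRing R] [MetricSpace R]
  [IsTopologicalSemiring R] [ContinuousStar R] [TopologicalSpace A] [Ring A] [StarRing A]
  [Algebra R A] [ContinuousFunctionalCalculus R A p]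

noncomputable def cfcHomOn {a : A} (ha : p a) {s : Set R} (hs : spectrum R a ⊆ s) :
    C(s, R) →⋆ₐ[R] A :=
  (cfcHom ha).comp (ContinuousMap.compStarAlgHom' R R ⟨Set.inclusion hs, continuous_inclusion hs⟩)

theorem cfcHomOn_domRestrict {a : A} (ha : p a) {s : Set R} (hs : spectrum R a ⊆ s)
    {φ : R → R} (hφ : ContinuousOn φ s) :
    cfcHomOn ha hs ⟨s.domRestrict φ, hφ.domRestrict⟩ = cfc φ a := by
  rw [cfc_apply φ a ha (hφ.mono hs)]
  rfl

end cfcHomOn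

noncomputable def ContinuousLinearMap.vectorFunctional {H : Type*} [NormedAddCommGroup H]
    [InnerProductSpace ℂ H] [CompleteSpace H] (x : H) : (H →L[ℂ] H) →ₚ[ℝ] ℝ :=
  .mk₀ { toFun := fun T => (⟪T x, x⟫_ℂ).re
         map_add' := fun S T => by simp
         map_smul' := fun c T => by simp }
    fun T hT => ((ContinuousLinearMap.nonneg_iff_isPositive T).mp hT).re_inner_nonneg_left x

theorem stmt_17_general {H : Type*} [NormedAddCommGroup H] [InnerProductSpace ℂ H] [CompleteSpace H]
    (n : ℕ) (A : Fin n → (H →L[ℂ] H)) (hA : ∀ j, IsSelfAdjoint (A j))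
    (γ Γ : ℝ) (hspec : ∀ j, spectrum ℝ (A j) ⊆ Set.Icc γ Γ)
    (h f g : ℝ → ℝ)
    (hh : ContinuousOn h (Set.Icc γ Γ))
    (hf : ContinuousOn f (Set.Icc γ Γ)) (hg : ContinuousOn g (Set.Icc γ Γ))
    (hsync : ∀ s ∈ Set.Icc γ Γ, ∀ t ∈ Set.Icc γ Γ,
      0 ≤ (h t * f s - h s * f t) * (h t * g s - h s * g t))
    (x : Fin n → H) :
    (∑ j, (⟪(cfc h (A j) * cfc g (A j)) (x j), x j⟫_ℂ).re) *
        (∑ j, (⟪(cfc h (A j) * cfc f (A j)) (x j), x j⟫_ℂ).re) ≤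
      (∑ j, (⟪((cfc h (A j)) ^ 2) (x j), x j⟫_ℂ).re) *
        (∑ j, (⟪(cfc f (A j) * cfc g (A j)) (x j), x j⟫_ℂ).re) := by
  let Φ : C(Set.Icc γ Γ, ℝ) →ₚ[ℝ] ℝ := ∑ j,
    (ContinuousLinearMap.vectorFunctional (x j)).comp (.ofClass (cfcHomOn (hA j) (hspec j)))
  have hΦ : ∀ u, Φ u = ∑ j, (⟪cfcHomOn (hA j) (hspec j) u (x j), x j⟫_ℂ).re :=
    fun u => PositiveLinearMap.sum_apply _ _ u
  simp only [← cfcHomOn_domRestrict (hA _) (hspec _) hh, ← cfcHomOn_domRestrict (hA _) (hspec _) hf,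
    ← cfcHomOn_domRestrict (hA _) (hspec _) hg, ← map_mul, ← map_pow, ← hΦ]
  exact Φ.mul_le_mul_of_synchronous _ _ _ fun s t => hsync s s.2 t t.2

theorem stmt_17 {H : Type*} [NormedAddCommGroup H] [InnerProductSpace ℂ H] [CompleteSpace H]
    (n : ℕ) (A : Fin n → (H →L[ℂ] H)) (hA : ∀ j, IsSelfAdjoint (A j))
    (γ Γ : ℝ) (hγΓ : γ < Γ) (hspec : ∀ j, spectrum ℝ (A j) ⊆ Set.Icc γ Γ)
    (h f g : ℝ → ℝ)
    (hh : ContinuousOn h (Set.Icc γ Γ)) (hh0 : ∀ t ∈ Set.Icc γ Γ, 0 ≤ h t)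
    (hf : ContinuousOn f (Set.Icc γ Γ)) (hg : ContinuousOn g (Set.Icc γ Γ))
    (hsync : ∀ s ∈ Set.Icc γ Γ, ∀ t ∈ Set.Icc γ Γ,
      0 ≤ (h t * f s - h s * f t) * (h t * g s - h s * g t))
    (x : Fin n → H) (hx : ∑ j, ‖x j‖ ^ 2 = 1) :
    (∑ j, (⟪(cfc h (A j) * cfc g (A j)) (x j), x j⟫_ℂ).re) *
        (∑ j, (⟪(cfc h (A j) * cfc f (A j)) (x j), x j⟫_ℂ).re) ≤
      (∑ j, (⟪((cfc h (A j)) ^ 2) (x j), x j⟫_ℂ).re) *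
        (∑ j, (⟪(cfc f (A j) * cfc g (A j)) (x j), x j⟫_ℂ).re) :=
  stmt_17_general n A hA γ Γ hspec h f g hh hf hg hsync x
end
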